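/- Let g be a Lie algebra with nondegenerate symmetric invariant bilinear form ⟨·,·⟩, and let ĝ_p be the three-point affine Lie algebra with underlying space g⊗ℂ[t,t⁻¹] ⊕ g¹⊗ℂ[t,t⁻¹] ⊕ ℂκ₊ ⊕ ℂκ₋ and the defining brackets below. Let g̃⁻ = g⊗ℂ((t⁻¹)) ⊕ ℂκ with [a⊗f, b⊗g] = [a,b]⊗fg + ⟨a,b⟩ Res_t(f'g) κ. Then the linear map ρ₋ sending a(n) ↦ a⊗t^n, a¹(n) ↦ ∑_{i≥0} λ_i 4^i a⊗t^{n-i+1}, κ₊ ↦ 0, κ₋ ↦ κ is a Lie algebra homomorphism ρ₋ : ĝ_p → g̃⁻. -/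

import Mathlib

open scoped TensorProduct

noncomputable def lam (n : ℕ) : ℂ :=
  (∏ k ∈ Finset.range n, ((1 : ℂ) / 2 - k)) / n.factorial

/-- λ_k for k ∈ ℤ, with λ_k = 0 for k < 0. -/
noncomputable def lamZ (k : ℤ) : ℂ := if 0 ≤ k then lam k.toNat else 0

/-- We model ℂ((t⁻¹)) as formal Laurent series in s = t⁻¹, so t^k ↦ s^{-k}
(`HahnSeries.single (-k) 1`) and Res_t (the coefficient of t⁻¹) is the
coefficient of s¹. `lderiv` is d/ds and `tderiv` is d/dt = -s² d/ds. -/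
noncomputable def lderiv (F : LaurentSeries ℂ) : LaurentSeries ℂ where
  coeff k := (k + 1 : ℤ) • F.coeff (k + 1)
  isPWO_support' := by
    have h : (Function.support fun k : ℤ => (k + 1 : ℤ) • F.coeff (k + 1)) ⊆
        (fun k : ℤ => k - 1) '' F.support := by
      intro k hk
      simp only [Function.mem_support] at hk
      refine ⟨k + 1, ?_, by ring⟩
      simp only [HahnSeries.mem_support]
      intro h0
      apply hk
      rw [h0, smul_zero]
    exact (F.isPWO_support.image_of_monotone (fun a b hab => by omega)).mono h

noncomputable def tderiv (F : LaurentSeries ℂ) : LaurentSeries ℂ :=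
  -(HahnSeries.single (2 : ℤ) (1 : ℂ) * lderiv F)

/-- t^n as an element of ℂ((t⁻¹)). -/
noncomputable def tn (n : ℤ) : LaurentSeries ℂ := HahnSeries.single (-n : ℤ) (1 : ℂ)

/-- u = ∑_{i≥0} λ_i 4^i t^{1-i}, the expansion of √(t²+4t) at infinity, so that
∑_{i≥0} λ_i 4^i t^{n-i+1} = t^n · u. -/
noncomputable def uInf : LaurentSeries ℂ :=
  HahnSeries.single (-1 : ℤ) (1 : ℂ) *
    HahnSeries.ofPowerSeries ℤ ℂ (PowerSeries.mk fun i => lam i * 4 ^ i)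

/-- The underlying space of g̃⁻ = g ⊗ ℂ((t⁻¹)) ⊕ ℂκ. -/
abbrev Gt (L : Type*) [LieRing L] [LieAlgebra ℂ L] : Type _ :=
  (TensorProduct ℂ L (LaurentSeries ℂ)) × ℂ

/-- The bracket of g̃⁻ on pure tensors:
[a⊗f, b⊗g] = [a,b]⊗fg + ⟨a,b⟩ Res_t(f'g) κ. -/
noncomputable def pbr {L : Type*} [LieRing L] [LieAlgebra ℂ L]
    (B : LinearMap.BilinForm ℂ L) (a : L) (f : LaurentSeries ℂ)
    (b : L) (g : LaurentSeries ℂ) : Gt L :=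
  (⁅a, b⁆ ⊗ₜ[ℂ] (f * g), B a b * (tderiv f * g).coeff 1)

/-- ρ₋(a(n)) = a ⊗ t^n. -/
noncomputable def rhoA {L : Type*} [LieRing L] [LieAlgebra ℂ L]
    (a : L) (n : ℤ) : Gt L := (a ⊗ₜ[ℂ] tn n, 0)

/-- ρ₋(a¹(n)) = ∑_{i≥0} λ_i 4^i a ⊗ t^{n-i+1} = a ⊗ (t^n u). -/
noncomputable def rhoA1 {L : Type*} [LieRing L] [LieAlgebra ℂ L]
    (a : L) (n : ℤ) : Gt L := (a ⊗ₜ[ℂ] (tn n * uInf), 0)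

/-- ρ₋(κ₋) = κ (and ρ₋(κ₊) = 0). -/
noncomputable def kap (L : Type*) [LieRing L] [LieAlgebra ℂ L] : Gt L := (0, 1)

/-!
The series `u = uInf = ∑ λ_i 4^i t^{1-i}` is `t √(1 + 4/t)`: its coefficients are the binomial
coefficients of `(1 + 4s)^{1/2}` in `s = t⁻¹`, so `u² = t² + 4t`. Since `d/dt` is a derivation of
`ℂ((t⁻¹))`, differentiating gives `u' u = t + 2`. Each bracket of `ρ₋`-images then expands into
products `tᵏ`, `tᵏ u`, `tᵏ u²` and `tᵏ u' u`, whose residues are the central terms of `ĝ_p`.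
-/

open HahnSeries

lemma lam_eq_choose (n : ℕ) : lam n = Ring.choose (1 / 2 : ℂ) n := by
  rw [Ring.choose_eq_smul, ← Polynomial.aeval_eq_smeval, Polynomial.aeval_def,
    Polynomial.eval₂_eq_eval_map, descPochhammer_map, descPochhammer_eval_eq_prod_range, lam,
    smul_eq_mul, div_eq_inv_mul]

lemma mk_lam_mul_four_pow_mul_self :
    PowerSeries.mk (fun i => lam i * 4 ^ i) * PowerSeries.mk (fun i => lam i * 4 ^ i) =
      1 + PowerSeries.C (4 : ℂ) * PowerSeries.X := by
  have h : PowerSeries.mk (fun i => lam i * 4 ^ i) =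
      PowerSeries.rescale (4 : ℂ) (PowerSeries.binomialSeries ℂ (1 / 2 : ℂ)) := by
    ext n
    simp [lam_eq_choose, PowerSeries.coeff_rescale, mul_comm]
  rw [h, ← map_mul, ← PowerSeries.binomialSeries_add, add_halves, ← Nat.cast_one,
    PowerSeries.binomialSeries_nat, pow_one, map_add, map_one, PowerSeries.rescale_X]

lemma coeff_lderiv (F : LaurentSeries ℂ) (k : ℤ) :
    (lderiv F).coeff k = (k + 1 : ℤ) • F.coeff (k + 1) := rfl

lemma lderiv_eq_derivative : lderiv = LaurentSeries.derivative ℂ := by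
  ext F k
  simp [coeff_lderiv]

lemma lderiv_ofPowerSeries (φ : PowerSeries ℂ) :
    lderiv (ofPowerSeries ℤ ℂ φ) = ofPowerSeries ℤ ℂ (PowerSeries.derivative ℂ φ) := by
  ext k
  rw [coeff_lderiv]
  match k with
  | .ofNat n =>
    rw [Int.ofNat_eq_natCast, ← Nat.cast_one, ← Nat.cast_add, LaurentSeries.coeff_coe_powerSeries,
      LaurentSeries.coeff_coe_powerSeries, PowerSeries.coeff_derivative, zsmul_eq_mul, mul_comm]
    push_cast
    ring
  | .negSucc 0 => simp [PowerSeries.coeff_coe]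
  | .negSucc (n + 1) =>
    rw [PowerSeries.coeff_coe, PowerSeries.coeff_coe, if_pos (by omega), if_pos (by omega),
      smul_zero]

lemma lderiv_single_mul (c : ℤ) (F : LaurentSeries ℂ) :
    lderiv (single c 1 * F) = c • (single (c - 1) 1 * F) + single c 1 * lderiv F := by
  ext k
  simp only [coeff_lderiv, coeff_add, coeff_smul, coeff_single_mul, one_mul]
  rw [show k + 1 - c = k - (c - 1) by ring, show k - c + 1 = k - (c - 1) by ring, ← add_smul]
  congr 1
  ring

/-- Writing both factors as `sᵃ φ(s)` reduces the Leibniz rule to that of `PowerSeries.derivative`. -/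
lemma lderiv_mul (F G : LaurentSeries ℂ) : lderiv (F * G) = lderiv F * G + F * lderiv G := by
  obtain ⟨a, φ, rfl⟩ : ∃ a φ, F = single a 1 * ofPowerSeries ℤ ℂ φ :=
    ⟨_, _, (LaurentSeries.single_order_mul_powerSeriesPart F).symm⟩
  obtain ⟨b, ψ, rfl⟩ : ∃ b ψ, G = single b 1 * ofPowerSeries ℤ ℂ ψ :=
    ⟨_, _, (LaurentSeries.single_order_mul_powerSeriesPart G).symm⟩
  have single_add (c d : ℤ) : single (c + d) (1 : ℂ) = single c 1 * single d 1 := by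
    rw [single_mul_single, one_mul]
  rw [mul_mul_mul_comm, ← single_add, ← map_mul, lderiv_single_mul, lderiv_single_mul,
    lderiv_single_mul, lderiv_ofPowerSeries, lderiv_ofPowerSeries, lderiv_ofPowerSeries,
    Derivation.leibniz, map_add, smul_eq_mul, smul_eq_mul, map_mul, map_mul, map_mul,
    sub_eq_add_neg, sub_eq_add_neg, sub_eq_add_neg, single_add, single_add, single_add,
    single_add]
  ring

lemma tderiv_add (F G : LaurentSeries ℂ) : tderiv (F + G) = tderiv F + tderiv G := by
  simp only [tderiv, lderiv_eq_derivative, map_add, mul_add, neg_add]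

lemma tderiv_intCast_mul (k : ℤ) (F : LaurentSeries ℂ) : tderiv (k * F) = k * tderiv F := by
  simp only [tderiv, lderiv_eq_derivative, ← zsmul_eq_mul, map_zsmul, mul_smul_comm, smul_neg]

lemma tderiv_mul (F G : LaurentSeries ℂ) : tderiv (F * G) = tderiv F * G + F * tderiv G := by
  simp only [tderiv, lderiv_mul]
  ring

lemma tn_mul_tn (m n : ℤ) : tn m * tn n = tn (m + n) := by
  rw [tn, tn, tn, single_mul_single, one_mul, neg_add]

lemma tn_zero : tn 0 = 1 := by
  rw [tn, neg_zero, ← C_apply, map_one]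

lemma coeff_one_tn (k : ℤ) : (tn k).coeff 1 = if k = -1 then 1 else 0 := by
  simp only [tn, coeff_single]
  congr 1
  simp only [eq_comm (a := (1 : ℤ)), neg_eq_iff_eq_neg]

lemma coeff_intCast_mul (k : ℤ) (F : LaurentSeries ℂ) (j : ℤ) :
    ((k : LaurentSeries ℂ) * F).coeff j = k * F.coeff j := by
  rw [← zsmul_eq_mul, coeff_smul, zsmul_eq_mul]

lemma tderiv_tn (m : ℤ) : tderiv (tn m) = m * tn (m - 1) := by
  ext k
  simp only [tderiv, tn, coeff_neg, coeff_single_mul, one_mul, coeff_lderiv, coeff_intCast_mul,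
    coeff_single]
  by_cases h : k = -(m - 1)
  · rw [if_pos (by omega), if_pos h, ← neg_smul, show -(k - 2 + 1) = m by omega, zsmul_eq_mul]
  · rw [if_neg (by omega), if_neg h, smul_zero, mul_zero, neg_zero]

lemma uInf_mul_self : uInf * uInf = tn 2 + 4 * tn 1 := by
  have h4 : ofPowerSeries ℤ ℂ (PowerSeries.C (4 : ℂ)) = 4 := by
    rw [ofPowerSeries_C, map_ofNat]
  rw [uInf, mul_mul_mul_comm, single_mul_single, one_mul, ← (ofPowerSeries ℤ ℂ).map_mul,
    mk_lam_mul_four_pow_mul_self, (ofPowerSeries ℤ ℂ).map_add, (ofPowerSeries ℤ ℂ).map_one,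
    (ofPowerSeries ℤ ℂ).map_mul, h4, ofPowerSeries_X, tn, tn, mul_add, mul_one, mul_left_comm,
    single_mul_single]
  norm_num

lemma tderiv_uInf_mul_uInf : tderiv uInf * uInf = tn 1 + 2 := by
  have two_ne_zero' : (2 : LaurentSeries ℂ) ≠ 0 := by
    rw [← map_ofNat C 2]
    exact C_ne_zero two_ne_zero
  apply mul_left_cancel₀ two_ne_zero'
  calc 2 * (tderiv uInf * uInf) = tderiv (uInf * uInf) := by rw [tderiv_mul]; ring
    _ = tderiv (tn 2) + ((4 : ℤ) : LaurentSeries ℂ) * tderiv (tn 1) := by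
      rw [uInf_mul_self, tderiv_add, ← tderiv_intCast_mul, Int.cast_ofNat]
    _ = 2 * (tn 1 + 2) := by
      rw [tderiv_tn, tderiv_tn, sub_self, tn_zero, show (2 : ℤ) - 1 = 1 by norm_num]
      push_cast
      ring

lemma coeff_one_tn_mul_uInf (k : ℤ) : (tn k * uInf).coeff 1 = lamZ (k + 2) * 4 ^ (k + 2) := by
  rw [uInf, tn, ← mul_assoc, single_mul_single, one_mul, coeff_single_mul, one_mul,
    PowerSeries.coeff_coe, lamZ, show 1 - (-k + -1) = k + 2 by ring]
  split_ifs with hneg hnonneg hnonneg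
  · omega
  · simp
  · obtain ⟨n, hn⟩ := Int.eq_ofNat_of_zero_le hnonneg
    simp [hn]
  · omega

lemma tn_mul_uInf_mul_tn_mul_uInf (m n : ℤ) :
    (tn m * uInf) * (tn n * uInf) = tn (m + n + 2) + 4 * tn (m + n + 1) := by
  rw [mul_mul_mul_comm, uInf_mul_self, tn_mul_tn, mul_add, tn_mul_tn, mul_left_comm, tn_mul_tn]

lemma tderiv_tn_mul_uInf_mul_tn_mul_uInf (m n : ℤ) :
    tderiv (tn m * uInf) * (tn n * uInf) =
      ((m + 1 : ℤ) : LaurentSeries ℂ) * tn (m + n + 1) +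
        ((4 * m + 2 : ℤ) : LaurentSeries ℂ) * tn (m + n) := by
  have h₁ : tn (m - 1) * tn n * tn 2 = tn (m + n + 1) := by
    rw [tn_mul_tn, tn_mul_tn]; ring_nf
  have h₂ : tn (m - 1) * tn n * tn 1 = tn (m + n) := by
    rw [tn_mul_tn, tn_mul_tn]; ring_nf
  have h₃ : tn (m + n) * tn 1 = tn (m + n + 1) := tn_mul_tn _ _
  calc tderiv (tn m * uInf) * (tn n * uInf)
      = m * (tn (m - 1) * tn n) * (uInf * uInf) + tn m * tn n * (tderiv uInf * uInf) := by
        rw [tderiv_mul, tderiv_tn]; ring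
    _ = _ := by
        rw [uInf_mul_self, tderiv_uInf_mul_uInf, tn_mul_tn m n]
        push_cast
        linear_combination (m : LaurentSeries ℂ) * h₁ + 4 * (m : LaurentSeries ℂ) * h₂ + h₃

lemma coeff_one_tderiv_tn_mul_tn (m n : ℤ) :
    (tderiv (tn m) * tn n).coeff 1 = m * if m + n = 0 then 1 else 0 := by
  rw [tderiv_tn, mul_assoc, tn_mul_tn, coeff_intCast_mul, coeff_one_tn]
  simp only [show m - 1 + n = -1 ↔ m + n = 0 by omega]

lemma coeff_one_tderiv_tn_mul_tn_mul_uInf (m n : ℤ) :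
    (tderiv (tn m) * (tn n * uInf)).coeff 1 = m * lamZ (m + n + 1) * 4 ^ (m + n + 1) := by
  rw [tderiv_tn, mul_assoc, ← mul_assoc (tn _), tn_mul_tn, coeff_intCast_mul,
    coeff_one_tn_mul_uInf, show m - 1 + n + 2 = m + n + 1 by ring, mul_assoc]

lemma coeff_one_tderiv_tn_mul_uInf_mul_tn_mul_uInf (m n : ℤ) :
    (tderiv (tn m * uInf) * (tn n * uInf)).coeff 1 =
      (4 * m + 2) * (if m + n + 1 = 0 then 1 else 0) +
        (m + 1) * (if m + n + 2 = 0 then 1 else 0) := by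
  rw [tderiv_tn_mul_uInf_mul_tn_mul_uInf, coeff_add, coeff_intCast_mul, coeff_intCast_mul,
    coeff_one_tn, coeff_one_tn]
  simp only [show m + n + 1 = -1 ↔ m + n + 2 = 0 by omega,
    show m + n = -1 ↔ m + n + 1 = 0 by omega]
  push_cast
  ring

/-- It suffices to check the brackets of the generators `a(n)`, `a¹(n)`: `κ₊ ↦ 0` and `κ₋ ↦ κ`
are central, so by bilinearity this determines `ρ₋` as a Lie algebra homomorphism. -/
theorem rho_minus_lieHom_general {L : Type*} [LieRing L] [LieAlgebra ℂ L]
    (B : LinearMap.BilinForm ℂ L) :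
    ∀ (a b : L) (m n : ℤ),
      -- [a(m), b(n)] = [a,b](m+n) + m⟨a,b⟩δ_{m+n,0}(κ₊+κ₋)
      pbr B a (tn m) b (tn n) =
        rhoA ⁅a, b⁆ (m + n) +
          ((m : ℂ) * B a b * (if m + n = 0 then 1 else 0)) • kap L ∧
      -- [a(m), b¹(n)] = [a,b]¹(m+n) + m⟨a,b⟩ λ_{m+n+1} 4^{m+n+1} κ₋
      pbr B a (tn m) b (tn n * uInf) =
        rhoA1 ⁅a, b⁆ (m + n) +
          ((m : ℂ) * B a b * lamZ (m + n + 1) * (4 : ℂ) ^ (m + n + 1)) • kap L ∧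
      -- [a¹(m), b¹(n)] = 4[a,b](m+n+1) + [a,b](m+n+2)
      --   + ((4m+2)δ_{m+n+1,0} + (m+1)δ_{m+n+2,0})⟨a,b⟩(κ₊+κ₋)
      pbr B a (tn m * uInf) b (tn n * uInf) =
        (4 : ℂ) • rhoA ⁅a, b⁆ (m + n + 1) + rhoA ⁅a, b⁆ (m + n + 2) +
          (((4 * (m : ℂ) + 2) * (if m + n + 1 = 0 then 1 else 0) +
            ((m : ℂ) + 1) * (if m + n + 2 = 0 then 1 else 0)) * B a b) • kap L := by
  intro a b m n
  have four_mul (x : LaurentSeries ℂ) : 4 * x = (4 : ℂ) • x := by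
    rw [← C_mul_eq_smul, map_ofNat]
  simp only [pbr, rhoA, rhoA1, kap, Prod.smul_mk, Prod.mk_add_mk, smul_zero, add_zero, zero_add,
    smul_eq_mul, mul_one, mul_zero, Prod.mk.injEq]
  refine ⟨⟨by rw [tn_mul_tn], ?_⟩, ⟨by rw [← mul_assoc, tn_mul_tn], ?_⟩, ⟨?_, ?_⟩⟩
  · rw [coeff_one_tderiv_tn_mul_tn]
    ring
  · rw [coeff_one_tderiv_tn_mul_tn_mul_uInf]
    ring
  · rw [tn_mul_uInf_mul_tn_mul_uInf, four_mul, TensorProduct.tmul_add, TensorProduct.tmul_smul,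
      add_comm]
  · rw [coeff_one_tderiv_tn_mul_uInf_mul_tn_mul_uInf]
    ring

/-- ρ₋ : ĝ_p → g̃⁻ is a Lie algebra homomorphism: it preserves the defining
brackets of the three-point affine Lie algebra ĝ_p on generators (the central
elements κ₊ ↦ 0, κ₋ ↦ κ are mapped to central elements, so this determines a
homomorphism by bilinearity). -/
theorem rho_minus_lieHom {L : Type*} [LieRing L] [LieAlgebra ℂ L]
    (B : LinearMap.BilinForm ℂ L)
    (hsym : ∀ x y : L, B x y = B y x)
    (hinv : ∀ x y z : L, B ⁅x, y⁆ z = B x ⁅y, z⁆)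
    (hnd : B.Nondegenerate) :
    ∀ (a b : L) (m n : ℤ),
      -- [a(m), b(n)] = [a,b](m+n) + m⟨a,b⟩δ_{m+n,0}(κ₊+κ₋)
      pbr B a (tn m) b (tn n) =
        rhoA ⁅a, b⁆ (m + n) +
          ((m : ℂ) * B a b * (if m + n = 0 then 1 else 0)) • kap L ∧
      -- [a(m), b¹(n)] = [a,b]¹(m+n) + m⟨a,b⟩ λ_{m+n+1} 4^{m+n+1} κ₋
      pbr B a (tn m) b (tn n * uInf) =
        rhoA1 ⁅a, b⁆ (m + n) +
          ((m : ℂ) * B a b * lamZ (m + n + 1) * (4 : ℂ) ^ (m + n + 1)) • kap L ∧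
      -- [a¹(m), b¹(n)] = 4[a,b](m+n+1) + [a,b](m+n+2)
      --   + ((4m+2)δ_{m+n+1,0} + (m+1)δ_{m+n+2,0})⟨a,b⟩(κ₊+κ₋)
      pbr B a (tn m * uInf) b (tn n * uInf) =
        (4 : ℂ) • rhoA ⁅a, b⁆ (m + n + 1) + rhoA ⁅a, b⁆ (m + n + 2) +
          (((4 * (m : ℂ) + 2) * (if m + n + 1 = 0 then 1 else 0) +
            ((m : ℂ) + 1) * (if m + n + 2 = 0 then 1 else 0)) * B a b) • kap L :=
  rho_minus_lieHom_general B
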